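/- arXiv:2306.04151 — 3 statements merged into one kernel-verified Lean document; each statement's English description precedes it below -/
import Mathlib

section
/- If a signed graph G on one vertex has at least two negative loops, then G is A-connected for every abelian group A with |A| ≥ 2. That is, for every A-boundary β (necessarily β(v) = 2a for some a ∈ A), there is a nowhere-zero function f on the edges and an orientation with ∂f = β. -/
/-- A signed multigraph; `sign e = true` means positive, `false` negative. -/
structure SignedMultigraph (V E : Type*) where
  fst : E → V
  snd : E → V
  sign : E → Bool

/-- An orientation: a value `±1` for each half-edge, with opposite values on a
positive edge and equal values on a negative edge. -/
structure SignedMultigraph.Orientation {V E : Type*} (G : SignedMultigraph V E) where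
  τ₁ : E → ℤ
  τ₂ : E → ℤ
  τ₁_mem : ∀ e, τ₁ e = 1 ∨ τ₁ e = -1
  τ₂_mem : ∀ e, τ₂ e = 1 ∨ τ₂ e = -1
  pos_compat : ∀ e, G.sign e = true → τ₂ e = - τ₁ e
  neg_compat : ∀ e, G.sign e = false → τ₂ e = τ₁ e

/-- The boundary `∂f(v) = Σ_{half-edges h at v} τ(h) f(e_h)`. -/
def SignedMultigraph.boundary {V E A : Type*} [Fintype E] [DecidableEq V]
    [AddCommGroup A] (G : SignedMultigraph V E) (τ : G.Orientation)
    (f : E → A) (v : V) : A :=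
  ∑ e, ((if G.fst e = v then τ.τ₁ e else 0) + (if G.snd e = v then τ.τ₂ e else 0)) • f e

/-- `G` is `A`-connected: every `A`-boundary `β` (a map with `Σ β(v) = a + a`
for some `a`) is satisfied by a nowhere-zero `f` with some orientation. -/
def SignedMultigraph.IsAConnected {V E : Type*} (G : SignedMultigraph V E)
    (A : Type*) [Fintype V] [Fintype E] [DecidableEq V] [AddCommGroup A] : Prop :=
  ∀ β : V → A, (∃ a : A, ∑ v, β v = a + a) →
    ∃ (τ : G.Orientation) (f : E → A), (∀ e, f e ≠ 0) ∧ ∀ v, G.boundary τ f v = β v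

lemma exists_two_nonzero {A : Type*} [AddCommGroup A] (x : A) (hx : x ≠ 0) (c : A) :
    ∃ u w : A, u ≠ 0 ∧ w ≠ 0 ∧ u + u + (w + w) = c + c := by
  by_cases h : c = x
  · by_cases h2 : x + x = 0
    · exact ⟨x, x, hx, hx, by simp [h, h2]⟩
    · refine ⟨-x, c + x, neg_ne_zero.mpr hx, by rwa [h], by abel⟩
  · exact ⟨x, c - x, hx, sub_ne_zero.mpr h, by abel⟩

/-- a signed graph on one vertex with at least two negative loops
is `A`-connected for every abelian group `A` with `|A| ≥ 2`.  (On a single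
vertex every edge is a loop.) -/
theorem oneVertex_twoNegLoops_isAConnected {V E A : Type*} [Fintype V] [Fintype E]
    [DecidableEq V] [Unique V] [AddCommGroup A] [Fintype A]
    (G : SignedMultigraph V E) (hA : 2 ≤ Fintype.card A)
    (hloops : ∃ e₁ e₂ : E, e₁ ≠ e₂ ∧ G.sign e₁ = false ∧ G.sign e₂ = false) :
    G.IsAConnected A := by
  classical
  obtain ⟨e₁, e₂, hne, hs₁, hs₂⟩ := hloops
  have hxA : (1 : ℕ) < Fintype.card A := hA
  obtain ⟨x, hx⟩ := Fintype.exists_ne_of_one_lt_card hxA 0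
  intro β ⟨a, ha⟩
  -- the set of negative edges
  set s : Finset E := Finset.univ.filter (fun e => G.sign e = false) with hs
  have he₁ : e₁ ∈ s := by simp [hs, hs₁]
  have he₂ : e₂ ∈ s.erase e₁ := by simp [hs, hs₂, Ne.symm hne, hne]
  set t : Finset E := (s.erase e₁).erase e₂ with ht
  set n : ℕ := t.card with hn
  obtain ⟨u, w, hu, hw, huw⟩ := exists_two_nonzero x hx (a - n • x)
  -- the orientation: τ₁ = 1 everywhere
  refine ⟨⟨fun _ => 1, fun e => if G.sign e then -1 else 1, fun e => Or.inl rfl,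
    fun e => by by_cases h : G.sign e <;> simp [h],
    fun e h => by simp [h], fun e h => by simp [h]⟩,
    fun e => if e = e₁ then u else if e = e₂ then w else x, ?_, ?_⟩
  · intro e
    by_cases h1 : e = e₁ <;> by_cases h2 : e = e₂ <;> simp [h1, h2, hu, hw, hx, Ne.symm hne]
  · intro v
    have hv : ∀ w : V, w = v := fun w => Subsingleton.elim w v
    have hsum : ∑ v, β v = β v := by
      rw [Fintype.sum_unique]; rw [hv default]
    rw [← hsum, ha]
    unfold SignedMultigraph.boundary
    simp only [hv, if_pos rfl]
    have hcoef : ∀ e : E, ((1 : ℤ) + (if G.sign e then -1 else 1)) •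
        (if e = e₁ then u else if e = e₂ then w else x)
        = if G.sign e = false then (2 : ℤ) • (if e = e₁ then u else if e = e₂ then w else x) else 0 := by
      intro e
      by_cases h : G.sign e <;> simp [h]
    calc ∑ e, ((1 : ℤ) + (if G.sign e then -1 else 1)) •
          (if e = e₁ then u else if e = e₂ then w else x)
        = ∑ e ∈ s, (2 : ℤ) • (if e = e₁ then u else if e = e₂ then w else x) := by
          rw [Finset.sum_filter]
          exact Finset.sum_congr rfl (fun e _ => hcoef e)
      _ = (2 : ℤ) • u + ((2 : ℤ) • w + ∑ e ∈ t, (2 : ℤ) • x) := by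
          rw [← Finset.add_sum_erase _ _ he₁, ← Finset.add_sum_erase _ _ he₂]
          simp only [if_pos rfl, ← ht]
          congr 2
          · simp [Ne.symm hne]
          · refine Finset.sum_congr rfl (fun e he => ?_)
            have h2 : e ≠ e₂ := (Finset.mem_erase.mp he).1
            have h1 : e ≠ e₁ := (Finset.mem_erase.mp (Finset.mem_erase.mp he).2).1
            simp [h1, h2]
      _ = a + a := by
          rw [Finset.sum_const, ← hn]
          have : n • ((2 : ℤ) • x) = (n • x) + (n • x) := by
            rw [two_smul, smul_add]
          rw [this]
          have h2 : (2 : ℤ) • u = u + u := two_smul ℤ u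
          have h3 : (2 : ℤ) • w = w + w := two_smul ℤ w
          rw [h2, h3]
          have := huw
          rw [sub_add, ← sub_add] at this
          -- huw : u + u + (w + w) = (a - n•x) + (a - n•x)
          have goal : u + u + (w + w + (n • x + n • x)) = a + a := by
            rw [← add_assoc, huw]; abel
          exact goal
end

section
/- Let G be a 2-unbalanced, 3-edge-connected signed graph on at least two vertices, let v be a vertex of degree at least 4, and let e be an edge incident to v. Then there is at most one edge f ≠ e incident to v such that the signed graph obtained from G by uncontracting at v with {e,f} is not 2-unbalanced. -/
namespace SignedMultigraph

variable {V E : Type*}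

/-- The signature obtained from `G.sign` by switching at the vertex set `S`:
the sign of an edge is negated iff exactly one of its endpoints lies in `S`. -/
def switchSign [DecidableEq V] (G : SignedMultigraph V E) (S : Finset V) (e : E) : Bool :=
  if (G.fst e ∈ S) ↔ (G.snd e ∈ S) then G.sign e else !G.sign e

/-- `G` is `k`-unbalanced: every signature equivalent to `G.sign` under
switching has at least `k` negative edges. -/
def IsKUnbalanced [DecidableEq V] [Fintype E] (G : SignedMultigraph V E) (k : ℕ) : Prop :=
  ∀ S : Finset V, k ≤ (Finset.univ.filter fun e => G.switchSign S e = false).card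

/-- The edge cut `δ(X)`: edges with exactly one endpoint in `X`. -/
def edgeCut [DecidableEq V] [Fintype E] (G : SignedMultigraph V E) (X : Finset V) :
    Finset E :=
  Finset.univ.filter fun e => ¬ ((G.fst e ∈ X) ↔ (G.snd e ∈ X))

/-- `G` is 3-edge-connected: every nonempty proper vertex set has at least 3
edges in its cut. -/
def ThreeEdgeConnected [DecidableEq V] [Fintype V] [Fintype E]
    (G : SignedMultigraph V E) : Prop :=
  ∀ X : Finset V, X.Nonempty → X ≠ Finset.univ → 3 ≤ (G.edgeCut X).card

/-- The degree of a vertex (loops counted twice). -/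
def degree [DecidableEq V] [Fintype E] (G : SignedMultigraph V E) (v : V) : ℕ :=
  ∑ e, ((if G.fst e = v then 1 else 0) + (if G.snd e = v then 1 else 0))

/-- `e` is incident to `v`. -/
def Incident (G : SignedMultigraph V E) (e : E) (v : V) : Prop :=
  G.fst e = v ∨ G.snd e = v

/-- Uncontracting at `v` with `{e, f}`: add a new vertex `v'` (here `none`),
reattach the `v`-endpoint of each of `e` and `f` at `v'`, and add a new
positive edge `v v'` (here the edge `none`). -/
def uncontractAt [DecidableEq V] [DecidableEq E] (G : SignedMultigraph V E)
    (v : V) (e f : E) : SignedMultigraph (Option V) (Option E) where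
  fst := fun g => match g with
    | none => some v
    | some g => if (g = e ∨ g = f) ∧ G.fst g = v then none else some (G.fst g)
  snd := fun g => match g with
    | none => none
    | some g => if (g = e ∨ g = f) ∧ G.fst g ≠ v ∧ G.snd g = v then none
                else some (G.snd g)
  sign := fun g => match g with
    | none => true
    | some g => G.sign g

end SignedMultigraph

open SignedMultigraph

/-! A switching of the uncontracted graph with at most one negative edge must separate `v` from
the new vertex: otherwise it restricts to a switching of `G` with the same signs on the old edges.
So the new edge is negative, all old edges are positive, and on `G` the restricted switching has
exactly `e` and `f` negative. For `f₁ ≠ f₂` the two negative sets `{e, f₁}` and `{e, f₂}` differ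
exactly on the cut of `S₁ ∆ S₂`, a 2-edge cut. -/

open scoped symmDiff

namespace SignedMultigraph

variable {V E : Type*} [DecidableEq V]

instance (G : SignedMultigraph V E) (e : E) (v : V) : Decidable (G.Incident e v) :=
  inferInstanceAs (Decidable (_ ∨ _))

section Switching

variable [Fintype E] (G : SignedMultigraph V E)

def negEdges (S : Finset V) : Finset E :=
  Finset.univ.filter fun e => G.switchSign S e = false

theorem switchSign_ne_switchSign_iff (S₁ S₂ : Finset V) (e : E) :
    G.switchSign S₁ e ≠ G.switchSign S₂ e ↔ e ∈ G.edgeCut (S₁ ∆ S₂) := by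
  simp only [switchSign, edgeCut, Finset.mem_filter, Finset.mem_univ, true_and,
    Finset.mem_symmDiff]
  split_ifs <;> cases G.sign e <;> simp <;> tauto

theorem negEdges_symmDiff [DecidableEq E] (S₁ S₂ : Finset V) :
    G.negEdges S₁ ∆ G.negEdges S₂ = G.edgeCut (S₁ ∆ S₂) := by
  ext e
  rw [← switchSign_ne_switchSign_iff]
  simp only [negEdges, Finset.mem_symmDiff, Finset.mem_filter, Finset.mem_univ, true_and]
  cases G.switchSign S₁ e <;> cases G.switchSign S₂ e <;> simp

theorem ThreeEdgeConnected.three_le_card_edgeCut [Fintype V] {G : SignedMultigraph V E}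
    (hG : G.ThreeEdgeConnected) {X : Finset V} (hX : (G.edgeCut X).Nonempty) :
    3 ≤ (G.edgeCut X).card := by
  obtain ⟨e, he⟩ := hX
  simp only [edgeCut, Finset.mem_filter, Finset.mem_univ, true_and] at he
  refine hG X ?_ ?_
  · by_cases h : G.fst e ∈ X
    · exact ⟨_, h⟩
    · exact ⟨G.snd e, by tauto⟩
  · rintro rfl
    simp at he

end Switching

section Uncontraction

variable [DecidableEq E] (G : SignedMultigraph V E) (v : V) (e f : E) (S : Finset (Option V))

theorem uncontractAt_switchSign_none :
    (G.uncontractAt v e f).switchSign S none = decide (some v ∈ S ↔ none ∈ S) := by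
  simp [switchSign, uncontractAt]

theorem uncontractAt_switchSign_some (g : E) :
    (G.uncontractAt v e f).switchSign S (some g) =
      if (g = e ∨ g = f) ∧ G.Incident g v ∧ ¬(none ∈ S ↔ some v ∈ S)
      then !G.switchSign S.eraseNone g else G.switchSign S.eraseNone g := by
  simp only [switchSign, uncontractAt, Incident, Finset.mem_eraseNone]
  by_cases hg : g = e ∨ g = f <;> by_cases h1 : G.fst g = v <;> by_cases h2 : G.snd g = v <;>
    by_cases h3 : none ∈ S <;> by_cases h4 : some v ∈ S <;> simp_all <;>
    by_cases h5 : some (G.fst g) ∈ S <;> by_cases h6 : some (G.snd g) ∈ S <;> simp_all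

theorem exists_negEdges_eq_pair_of_not_isKUnbalanced_two [Fintype E] {G : SignedMultigraph V E}
    {v : V} {e f : E} (hG : G.IsKUnbalanced 2) (he : G.Incident e v) (hf : G.Incident f v)
    (hbad : ¬(G.uncontractAt v e f).IsKUnbalanced 2) : ∃ S, G.negEdges S = {e, f} := by
  obtain ⟨S, hS⟩ : ∃ S, ((G.uncontractAt v e f).negEdges S).card ≤ 1 := by
    simpa [IsKUnbalanced, negEdges] using hbad
  by_cases hsep : none ∈ S ↔ some v ∈ S
  · have hsub : (G.negEdges S.eraseNone).map .some ⊆ (G.uncontractAt v e f).negEdges S := by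
      intro g hg
      obtain ⟨g, hg, rfl⟩ := Finset.mem_map.mp hg
      simp_all [negEdges, uncontractAt_switchSign_some]
    have hcard := (hG S.eraseNone).trans
      ((Finset.card_map _).symm.trans_le (Finset.card_le_card hsub))
    omega
  · have hnone : none ∈ (G.uncontractAt v e f).negEdges S := by
      simpa [negEdges, uncontractAt_switchSign_none, Iff.comm] using hsep
    have hpos (g : E) : (G.uncontractAt v e f).switchSign S (some g) = true := by
      by_contra h
      exact Option.some_ne_none g <| Finset.card_le_one.mp hS _ (by simpa [negEdges] using h) _ hnone
    refine ⟨S.eraseNone, Finset.ext fun g => ?_⟩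
    have hg_pos := hpos g
    rw [uncontractAt_switchSign_some] at hg_pos
    by_cases hg : g = e ∨ g = f
    · have hinc : G.Incident g v := by rcases hg with rfl | rfl <;> assumption
      simp_all [negEdges]
    · simp_all [negEdges]

end Uncontraction

end SignedMultigraph

theorem at_most_one_bad_uncontraction_general {V E : Type*} [Fintype V] [Fintype E]
    [DecidableEq V] [DecidableEq E] (G : SignedMultigraph V E)
    (h3ec : G.ThreeEdgeConnected) (hunbal : G.IsKUnbalanced 2)
    (v : V) (e : E) (he : G.Incident e v) :
    ∀ f₁ f₂ : E, f₁ ≠ e → f₂ ≠ e → G.Incident f₁ v → G.Incident f₂ v →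
      ¬ (G.uncontractAt v e f₁).IsKUnbalanced 2 →
      ¬ (G.uncontractAt v e f₂).IsKUnbalanced 2 →
      f₁ = f₂ := by
  intro f₁ f₂ hf₁e hf₂e hf₁ hf₂ hbad₁ hbad₂
  by_contra hne
  obtain ⟨S₁, hS₁⟩ := exists_negEdges_eq_pair_of_not_isKUnbalanced_two hunbal he hf₁ hbad₁
  obtain ⟨S₂, hS₂⟩ := exists_negEdges_eq_pair_of_not_isKUnbalanced_two hunbal he hf₂ hbad₂
  have hcut : G.edgeCut (S₁ ∆ S₂) = {f₁, f₂} := by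
    rw [← negEdges_symmDiff, hS₁, hS₂]
    ext g
    simp only [Finset.mem_symmDiff, Finset.mem_insert, Finset.mem_singleton]
    grind
  have hcard := h3ec.three_le_card_edgeCut (X := S₁ ∆ S₂) (by simp [hcut])
  rw [hcut, Finset.card_pair hne] at hcard
  omega

/-- let `G` be a 2-unbalanced, 3-edge-connected signed graph on at
least two vertices, `v` a vertex of degree at least 4, and `e` an edge incident
to `v`.  Then there is at most one edge `f ≠ e` incident to `v` such that
uncontracting at `v` with `{e, f}` yields a graph that is not 2-unbalanced. -/
theorem at_most_one_bad_uncontraction {V E : Type*} [Fintype V] [Fintype E]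
    [DecidableEq V] [DecidableEq E] (G : SignedMultigraph V E)
    (hV : 2 ≤ Fintype.card V)
    (h3ec : G.ThreeEdgeConnected) (hunbal : G.IsKUnbalanced 2)
    (v : V) (hdeg : 4 ≤ G.degree v) (e : E) (he : G.Incident e v) :
    ∀ f₁ f₂ : E, f₁ ≠ e → f₂ ≠ e → G.Incident f₁ v → G.Incident f₂ v →
      ¬ (G.uncontractAt v e f₁).IsKUnbalanced 2 →
      ¬ (G.uncontractAt v e f₂).IsKUnbalanced 2 →
      f₁ = f₂ :=
  at_most_one_bad_uncontraction_general G h3ec hunbal v e he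
end

section
/- Let G be an oriented graph 2-cell embedded in a surface with an orientation chosen for each face, and let G* be its oriented signed dual. For any abelian group A and any function c: V(G) → A, the function f: E(G*) → A defined by f(e*) = c(v) − c(u) for each edge e of G directed from u to v is an A-flow on G* (satisfies conservation of flow at every vertex of G*). -/
/-- Combinatorial data of an oriented graph 2-cell embedded in a surface with
an orientation chosen for each face: each face `x` is described by its boundary
closed walk `wV x 0, wE x 0, wV x 1, …, wE x (len x - 1), wV x (len x) = wV x 0`
(traversed according to the chosen orientation of `x`), where `dir x i = true`
iff the `i`-th boundary edge is traversed agreeing with its orientation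
(`tail → head`) in the primal graph. -/
structure EmbeddedOrientedGraph (V E F : Type*) where
  tail : E → V
  head : E → V
  len : F → ℕ
  wV : F → ℕ → V
  wE : F → ℕ → E
  dir : F → ℕ → Bool
  closed : ∀ x, wV x (len x) = wV x 0
  step : ∀ x, ∀ i < len x,
    (dir x i = true → tail (wE x i) = wV x i ∧ head (wE x i) = wV x (i + 1)) ∧
    (dir x i = false → head (wE x i) = wV x i ∧ tail (wE x i) = wV x (i + 1))

/-- let `G` be an oriented graph 2-cell embedded in a surface
with an orientation of each face, and `G*` its oriented signed dual.  For any
abelian group `A` and `c : V(G) → A`, the function `f(e*) = c(v) - c(u)` (for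
`e` directed `u → v`) is an `A`-flow on `G*`: the boundary of `f` at each
dual vertex (face) `x` vanishes.  Per the dual-orientation rule, an edge
agreeing with the face orientation gives a half-edge directed towards the
corresponding dual vertex (coefficient `-1`), and a disagreeing edge a
half-edge directed away (coefficient `+1`). -/
theorem dual_tension_is_flow {V E F A : Type*} [AddCommGroup A]
    (D : EmbeddedOrientedGraph V E F) (c : V → A) (f : E → A)
    (hf : ∀ e, f e = c (D.head e) - c (D.tail e)) (x : F) :
    ∑ i ∈ Finset.range (D.len x),
      (if D.dir x i then (-1 : ℤ) else 1) • f (D.wE x i) = 0 := by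
  have key : ∀ i ∈ Finset.range (D.len x),
      (if D.dir x i then (-1 : ℤ) else 1) • f (D.wE x i)
        = c (D.wV x i) - c (D.wV x (i+1)) := by
    intro i hi
    rw [Finset.mem_range] at hi
    have hs := D.step x i hi
    rw [hf]
    cases h : D.dir x i with
    | true =>
      obtain ⟨h1, h2⟩ := hs.1 h
      simp [h1, h2]
    | false =>
      obtain ⟨h1, h2⟩ := hs.2 h
      simp [h1, h2]
  rw [Finset.sum_congr rfl key, Finset.sum_range_sub' (fun i => c (D.wV x i)),
    D.closed, sub_self]
end
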